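/- The 7-dimensional real nilpotent Lie algebra g = (0,0,0,0,12,13,0) admits a calibrated G2-structure. Explicitly, the 3-form φ = e^{147}+e^{267}+e^{357}+e^{123}+e^{156}+e^{245}−e^{346} is a G2 form on g and satisfies dφ = 0. -/

import Mathlib

/-!
The form `φ` is the standard G₂ form written in the relabelled basis
`(e₁, e₄, e₂, e₆, e₃, e₅, e₇)`, so it is a G₂ form. Only `e⁵` and `e⁶` have nonzero
differential (`e¹²` and `e¹³`), so `e¹⁴⁷` and `e¹²³` are closed, the differentials of `e¹⁵⁶`,
`e²⁴⁵` and `e³⁴⁶` vanish because each has a repeated factor, and `d e²⁶⁷ = e¹²³⁷` cancels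
`d e³⁵⁷ = -e¹²³⁷`.
-/

open scoped TensorProduct

noncomputable section

namespace G2Paper

variable {V : Type*} [AddCommGroup V] [Module ℝ V]

/-- The wedge product of two real-valued alternating forms. -/
def wedge {k l : ℕ} (α : V [⋀^Fin k]→ₗ[ℝ] ℝ) (β : V [⋀^Fin l]→ₗ[ℝ] ℝ) :
    V [⋀^Fin (k + l)]→ₗ[ℝ] ℝ :=
  ((TensorProduct.lid ℝ ℝ).toLinearMap.compAlternatingMap
    (α.domCoprod β)).domDomCongr finSumFinEquiv

/-- A linear functional regarded as an alternating 1-form. -/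
def oneForm (f : V →ₗ[ℝ] ℝ) : V [⋀^Fin 1]→ₗ[ℝ] ℝ :=
  AlternatingMap.ofSubsingleton ℝ V ℝ (0 : Fin 1) f

/-- The wedge of three linear functionals, as a 3-form. -/
def wedge3 (a b c : V →ₗ[ℝ] ℝ) : V [⋀^Fin 3]→ₗ[ℝ] ℝ :=
  wedge (wedge (oneForm a) (oneForm b)) (oneForm c)

/-- `e^i ∧ e^j` for a basis `e`. -/
def basis2Form {n : ℕ} (e : Module.Basis (Fin n) ℝ V) (i j : Fin n) : V [⋀^Fin 2]→ₗ[ℝ] ℝ :=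
  wedge (oneForm (e.coord i)) (oneForm (e.coord j))

/-- `e^i ∧ e^j ∧ e^k` for a basis `e`. -/
def basis3Form {n : ℕ} (e : Module.Basis (Fin n) ℝ V) (i j k : Fin n) : V [⋀^Fin 3]→ₗ[ℝ] ℝ :=
  wedge3 (e.coord i) (e.coord j) (e.coord k)

/-- The standard G₂ form `e¹²⁷+e³⁴⁷+e⁵⁶⁷+e¹³⁵−e²³⁶−e¹⁴⁶−e²⁴⁵` associated to a basis of a
7-dimensional space (here indices are 0-based, so e.g. `e¹²⁷` is `basis3Form B 0 1 6`). -/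
def stdG2 (B : Module.Basis (Fin 7) ℝ V) : V [⋀^Fin 3]→ₗ[ℝ] ℝ :=
  basis3Form B 0 1 6 + basis3Form B 2 3 6 + basis3Form B 4 5 6 + basis3Form B 0 2 4
    - basis3Form B 1 2 5 - basis3Form B 0 3 5 - basis3Form B 1 3 4

/-- A G₂ form on a 7-dimensional real vector space: a 3-form which, in some basis, is the
standard G₂ form. -/
def IsG2 (φ : V [⋀^Fin 3]→ₗ[ℝ] ℝ) : Prop :=
  ∃ B : Module.Basis (Fin 7) ℝ V, φ = stdG2 B

variable {L : Type*} [LieRing L] [LieAlgebra ℝ L]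

/-- The Chevalley–Eilenberg differential (with trivial coefficients) of a `(k+1)`-form, as a
function on `(k+2)`-tuples:
`(dα)(x₀,…,x_{k+1}) = Σ_{i<j} (−1)^{i+j} α(⁅xᵢ,xⱼ⁆, x₀,…,x̂ᵢ,…,x̂ⱼ,…,x_{k+1})`.
A `(k+1)`-form `α` is closed iff `ceDiff α = 0`, and exact iff `⇑α = ceDiff β` for some
`k`-form `β`. -/
def ceDiff {k : ℕ} (α : L [⋀^Fin (k + 1)]→ₗ[ℝ] ℝ) : (Fin (k + 2) → L) → ℝ :=
  fun x => ∑ i : Fin (k + 2), ∑ j : Fin (k + 2),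
    if h : (i : ℕ) < (j : ℕ) then
      (-1 : ℝ) ^ ((i : ℕ) + (j : ℕ)) *
        α (Fin.cons ⁅x i, x j⁆ fun m : Fin k =>
          x (j.succAbove ((Fin.castLT i
            (lt_of_lt_of_le h (Nat.lt_succ_iff.mp j.isLt))).succAbove m)))
    else 0

/-- The statement that a basis `e` of a Lie algebra has dual basis `e^1,…,e^n` satisfying the
structure equations `de^i = D i` for the Chevalley–Eilenberg differential. -/
def hasDualDiff {n : ℕ} (e : Module.Basis (Fin n) ℝ L) (D : Fin n → L [⋀^Fin 2]→ₗ[ℝ] ℝ) : Prop :=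
  ∀ i : Fin n, ceDiff (oneForm (e.coord i)) = ⇑(D i)

/-- A symplectic form on a (6-dimensional) Lie algebra: a closed 2-form `ω` with
`ω ∧ ω ∧ ω ≠ 0`. -/
def IsSymplectic (ω : L [⋀^Fin 2]→ₗ[ℝ] ℝ) : Prop :=
  ceDiff ω = 0 ∧ wedge (wedge ω ω) ω ≠ 0

open Equiv Sum

lemma oneForm_apply (f : V →ₗ[ℝ] ℝ) (x : Fin 1 → V) : oneForm f x = f (x 0) := rfl

lemma univ_modSumCongr_fin_one_fin_one :
    (Finset.univ : Finset (Perm.ModSumCongr (Fin 1) (Fin 1))) =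
      {Quotient.mk'' 1, Quotient.mk'' (swap (inl 0) (inr 0))} := by
  refine (Finset.eq_univ_iff_forall.2 fun q => ?_).symm
  induction q using Quotient.inductionOn' with | h σ => ?_
  simp only [Finset.mem_insert, Finset.mem_singleton]
  erw [QuotientGroup.eq, QuotientGroup.eq]
  revert σ; decide

-- A coset `σ (Perm (Fin 2) × Perm (Fin 1))` is determined by `σ (inr 0)`.
lemma univ_modSumCongr_fin_two_fin_one :
    (Finset.univ : Finset (Perm.ModSumCongr (Fin 2) (Fin 1))) =
      {Quotient.mk'' 1, Quotient.mk'' (swap (inl 0) (inr 0)),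
        Quotient.mk'' (swap (inl 1) (inr 0))} := by
  refine (Finset.eq_univ_iff_forall.2 fun q => ?_).symm
  induction q using Quotient.inductionOn' with | h σ => ?_
  simp only [Finset.mem_insert, Finset.mem_singleton]
  erw [QuotientGroup.eq, QuotientGroup.eq, QuotientGroup.eq]
  revert σ; decide

lemma sum_modSumCongr_fin_one_fin_one {M : Type*} [AddCommMonoid M]
    (f : Perm.ModSumCongr (Fin 1) (Fin 1) → M) :
    ∑ q, f q = f (Quotient.mk'' 1) + f (Quotient.mk'' (swap (inl 0) (inr 0))) := by
  rw [univ_modSumCongr_fin_one_fin_one, Finset.sum_pair]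
  erw [Ne, QuotientGroup.eq]; decide

lemma sum_modSumCongr_fin_two_fin_one {M : Type*} [AddCommMonoid M]
    (f : Perm.ModSumCongr (Fin 2) (Fin 1) → M) :
    ∑ q, f q = f (Quotient.mk'' 1) + f (Quotient.mk'' (swap (inl 0) (inr 0)))
      + f (Quotient.mk'' (swap (inl 1) (inr 0))) := by
  rw [univ_modSumCongr_fin_two_fin_one, Finset.sum_insert, Finset.sum_pair, add_assoc]
  · erw [Ne, QuotientGroup.eq]; decide
  · simp only [Finset.mem_insert, Finset.mem_singleton]
    erw [QuotientGroup.eq, QuotientGroup.eq]; decide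

lemma wedge_oneForm_oneForm_apply (a b : V →ₗ[ℝ] ℝ) (v : Fin 2 → V) :
    wedge (oneForm a) (oneForm b) v = a (v 0) * b (v 1) - a (v 1) * b (v 0) := by
  simp only [wedge, AlternatingMap.domDomCongr_apply, LinearMap.compAlternatingMap_apply,
    AlternatingMap.domCoprod_apply, sum_modSumCongr_fin_one_fin_one,
    AlternatingMap.domCoprod.summand_mk'', Perm.sign_one, Perm.sign_swap inl_ne_inr]
  simp only [Units.smul_def, Units.val_neg, Units.val_one, one_smul, neg_smul, add_apply,
    _root_.neg_apply, MultilinearMap.domDomCongr_apply, MultilinearMap.domCoprod_apply,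
    AlternatingMap.coe_multilinearMap, oneForm_apply, Perm.coe_one, id_eq, Function.comp_apply,
    swap_apply_left, swap_apply_right, LinearEquiv.coe_coe, map_add, map_neg,
    TensorProduct.lid_tmul, smul_eq_mul]
  exact (sub_eq_add_neg _ _).symm

lemma wedge_oneForm_apply (ω : V [⋀^Fin 2]→ₗ[ℝ] ℝ) (c : V →ₗ[ℝ] ℝ) (v : Fin 3 → V) :
    wedge ω (oneForm c) v = ω ![v 0, v 1] * c (v 2) - ω ![v 0, v 2] * c (v 1)
      + ω ![v 1, v 2] * c (v 0) := by
  simp only [wedge, AlternatingMap.domDomCongr_apply, LinearMap.compAlternatingMap_apply,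
    AlternatingMap.domCoprod_apply, sum_modSumCongr_fin_two_fin_one,
    AlternatingMap.domCoprod.summand_mk'', Perm.sign_one, Perm.sign_swap inl_ne_inr]
  simp only [Units.smul_def, Units.val_neg, Units.val_one, one_smul, neg_smul, add_apply,
    _root_.neg_apply, MultilinearMap.domDomCongr_apply, MultilinearMap.domCoprod_apply,
    AlternatingMap.coe_multilinearMap, oneForm_apply, Perm.coe_one, id_eq, Function.comp_apply,
    swap_apply_right, LinearEquiv.coe_coe, map_add, map_neg, TensorProduct.lid_tmul, smul_eq_mul]
  have h₁ : (fun i : Fin 2 => v (finSumFinEquiv (n := 1) (inl i))) = ![v 0, v 1] := by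
    ext i; fin_cases i <;> rfl
  have h₂ : (fun i : Fin 2 => v (finSumFinEquiv (n := 1) (swap (inl 0) (inr 0) (inl i)))) =
      ![v 1, v 2] ∘ swap 0 1 := by
    ext i; fin_cases i <;> rfl
  have h₃ : (fun i : Fin 2 => v (finSumFinEquiv (n := 1) (swap (inl 1) (inr 0) (inl i)))) =
      ![v 0, v 2] := by
    ext i; fin_cases i <;> rfl
  rw [h₁, h₂, h₃, ω.map_swap _ zero_ne_one]
  change ω ![v 0, v 1] * c (v 2) + -(-ω ![v 1, v 2] * c (v 0)) + -(ω ![v 0, v 2] * c (v 1)) = _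
  ring

lemma wedge3_apply (a b c : V →ₗ[ℝ] ℝ) (v : Fin 3 → V) :
    wedge3 a b c v = !![a (v 0), a (v 1), a (v 2); b (v 0), b (v 1), b (v 2);
      c (v 0), c (v 1), c (v 2)].det := by
  rw [wedge3, wedge_oneForm_apply, Matrix.det_fin_three]
  simp only [wedge_oneForm_oneForm_apply, Matrix.of_apply, Matrix.cons_val', Matrix.cons_val,
    Matrix.cons_val_zero, Matrix.cons_val_one, Matrix.cons_val_fin_one]
  ring

lemma basis3Form_apply {n : ℕ} (e : Module.Basis (Fin n) ℝ V) (i j k : Fin n) (v : Fin 3 → V) :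
    basis3Form e i j k v = !![e.coord i (v 0), e.coord i (v 1), e.coord i (v 2);
      e.coord j (v 0), e.coord j (v 1), e.coord j (v 2);
      e.coord k (v 0), e.coord k (v 1), e.coord k (v 2)].det :=
  wedge3_apply _ _ _ v

lemma ceDiff_apply_fin_two (α : L [⋀^Fin 1]→ₗ[ℝ] ℝ) (x : Fin 2 → L) :
    ceDiff α x = -α ![⁅x 0, x 1⁆] := by
  have hcons : ∀ (a : L) (f : Fin 0 → L), α (Fin.cons a f) = α ![a] := fun a f => by
    congr 1; ext m; fin_cases m; rfl
  simp [ceDiff, Fin.sum_univ_two, hcons]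

lemma ceDiff_apply_fin_four (α : L [⋀^Fin 3]→ₗ[ℝ] ℝ) (x : Fin 4 → L) :
    ceDiff α x = -α ![⁅x 0, x 1⁆, x 2, x 3] + α ![⁅x 0, x 2⁆, x 1, x 3]
      - α ![⁅x 0, x 3⁆, x 1, x 2] - α ![⁅x 1, x 2⁆, x 0, x 3]
      + α ![⁅x 1, x 3⁆, x 0, x 2] - α ![⁅x 2, x 3⁆, x 0, x 1] := by
  have hcons : ∀ (a : L) (f : Fin 2 → L), α (Fin.cons a f) = α ![a, f 0, f 1] := fun a f => by
    congr 1; ext m; fin_cases m <;> rfl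
  have hidx : ∀ h, (3 : Fin 4).succAbove ((Fin.castPred 2 h).succAbove 1) = 1 := fun _ => rfl
  simp +decide [ceDiff, Fin.sum_univ_four, hcons, hidx, Fin.succAbove_of_castSucc_lt,
    Fin.succAbove_of_le_castSucc]
  ring

lemma coord_lie_eq_of_hasDualDiff {n : ℕ} {e : Module.Basis (Fin n) ℝ L}
    {D : Fin n → L [⋀^Fin 2]→ₗ[ℝ] ℝ} (he : hasDualDiff e D) (i : Fin n) (u w : L) :
    e.coord i ⁅u, w⁆ = -D i ![u, w] := by
  rw [← he i, ceDiff_apply_fin_two, oneForm_apply, neg_neg]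
  rfl

lemma coord_reindex {ι ι' : Type*} (e : Module.Basis ι ℝ V) (σ : ι ≃ ι') (i : ι') :
    (e.reindex σ).coord i = e.coord (σ.symm i) := by
  ext u
  simp [Module.Basis.coord]

lemma basis3Form_reindex {n : ℕ} (e : Module.Basis (Fin n) ℝ V) (σ : Perm (Fin n))
    (i j k : Fin n) :
    basis3Form (e.reindex σ) i j k = basis3Form e (σ.symm i) (σ.symm j) (σ.symm k) := by
  simp only [basis3Form, coord_reindex]

def calibratedForm (e : Module.Basis (Fin 7) ℝ V) : V [⋀^Fin 3]→ₗ[ℝ] ℝ :=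
  basis3Form e 0 3 6 + basis3Form e 1 5 6 + basis3Form e 2 4 6
    + basis3Form e 0 1 2 + basis3Form e 0 4 5 + basis3Form e 1 3 4
    - basis3Form e 2 3 5

def g2Relabel : Perm (Fin 7) :=
  ⟨![0, 3, 1, 5, 2, 4, 6], ![0, 2, 4, 1, 5, 3, 6], by decide, by decide⟩

lemma calibratedForm_eq_stdG2 (e : Module.Basis (Fin 7) ℝ V) :
    calibratedForm e = stdG2 (e.reindex g2Relabel.symm) := by
  simp only [stdG2, basis3Form_reindex, symm_symm]
  ext v
  simp only [calibratedForm, g2Relabel, coe_fn_mk, AlternatingMap.add_apply,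
    AlternatingMap.sub_apply, basis3Form_apply, Matrix.det_fin_three, Matrix.of_apply,
    Matrix.cons_val', Matrix.cons_val, Matrix.cons_val_zero, Matrix.cons_val_one,
    Matrix.cons_val_fin_one]
  ring

lemma isG2_calibratedForm (e : Module.Basis (Fin 7) ℝ V) : IsG2 (calibratedForm e) :=
  ⟨_, calibratedForm_eq_stdG2 e⟩

lemma ceDiff_calibratedForm {g : Type*} [LieRing g] [LieAlgebra ℝ g]
    (e : Module.Basis (Fin 7) ℝ g)
    (he : hasDualDiff e ![0, 0, 0, 0, basis2Form e 0 1, basis2Form e 0 2, 0]) :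
    ceDiff (calibratedForm e) = 0 := by
  funext x
  simp only [ceDiff_apply_fin_four, calibratedForm, AlternatingMap.add_apply,
    AlternatingMap.sub_apply, basis3Form_apply, Matrix.det_fin_three, Matrix.of_apply,
    Matrix.cons_val', Matrix.cons_val, Matrix.cons_val_zero, Matrix.cons_val_one,
    Matrix.cons_val_fin_one, coord_lie_eq_of_hasDualDiff he, basis2Form,
    wedge_oneForm_oneForm_apply, AlternatingMap.zero_apply, Pi.zero_apply]
  ring

/-- The nilpotent Lie algebra `(0,0,0,0,12,13,0)` admits a calibrated
G₂-structure; explicitly, `φ = e¹⁴⁷+e²⁶⁷+e³⁵⁷+e¹²³+e¹⁵⁶+e²⁴⁵−e³⁴⁶` is a closed G₂ form. -/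
theorem calibrated_G2_on_0_0_0_0_12_13_0
    {g : Type*} [LieRing g] [LieAlgebra ℝ g] (e : Module.Basis (Fin 7) ℝ g)
    (he : hasDualDiff e
      ![0, 0, 0, 0, basis2Form e 0 1, basis2Form e 0 2, 0]) :
    (∃ φ : g [⋀^Fin 3]→ₗ[ℝ] ℝ, IsG2 φ ∧ ceDiff φ = 0) ∧
      IsG2 (basis3Form e 0 3 6 + basis3Form e 1 5 6 + basis3Form e 2 4 6
        + basis3Form e 0 1 2 + basis3Form e 0 4 5 + basis3Form e 1 3 4
        - basis3Form e 2 3 5) ∧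
      ceDiff (basis3Form e 0 3 6 + basis3Form e 1 5 6 + basis3Form e 2 4 6
        + basis3Form e 0 1 2 + basis3Form e 0 4 5 + basis3Form e 1 3 4
        - basis3Form e 2 3 5) = 0 := by
  have hG2 := isG2_calibratedForm e
  have hclosed := ceDiff_calibratedForm e he
  exact ⟨⟨_, hG2, hclosed⟩, hG2, hclosed⟩

end G2Paper
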